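/- Let C ⊆ [0,R] be measurable with the Lebesgue measure of [0,R] \ C at most δ > 0. For any g > 0 and any natural number n with n·g > δ and n ≥ 1, dividing [0,R] into n consecutive closed subintervals of equal length R/n, at least one subinterval I has the property that every open subinterval of I of length g contains a point of C. -/

import Mathlib

/-!
If every one of the `n` subintervals contained an open gap of `C` of length `g`, these `n`
gaps would be pairwise disjoint open intervals inside `[0,R] \ C`, of total length `n * g > δ`,
exceeding the measure of `[0,R] \ C`.
-/

open MeasureTheory Set Function

theorem Ioo_subset_Ioo_of_Icc_subset_Icc {α : Type*} [Preorder α] {a b c d : α}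
    (h : Icc a b ⊆ Icc c d) : Ioo a b ⊆ Ioo c d := fun _ ⟨hax, hxb⟩ =>
  have hab : a ≤ b := (hax.trans hxb).le
  ⟨(h ⟨le_rfl, hab⟩).1.trans_lt hax, hxb.trans_le (h ⟨hab, le_rfl⟩).2⟩

section Subintervals

variable {α : Type*} [Field α] [LinearOrder α] [IsStrictOrderedRing α]

theorem Ioo_mul_div_subset_Icc (R : α) {n k : ℕ} (hk : k < n) :
    Ioo ((k : α) * R / n) (((k : α) + 1) * R / n) ⊆ Icc 0 R := by
  intro x ⟨hkx, hxk⟩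
  have hn : (0 : α) < n := by exact_mod_cast (k.zero_le.trans_lt hk)
  have hk1 : (k : α) + 1 ≤ n := by exact_mod_cast hk
  have hR : 0 < R := by
    have : (k : α) * R < ((k : α) + 1) * R := by
      simpa only [div_lt_div_iff_of_pos_right hn] using hkx.trans hxk
    linarith
  constructor
  · exact (div_nonneg (mul_nonneg k.cast_nonneg hR.le) hn.le).trans hkx.le
  · calc x ≤ ((k : α) + 1) * R / n := hxk.le
      _ ≤ (n : α) * R / n := by gcongr
      _ = R := by field_simp

theorem pairwise_disjoint_Ioo_mul_div (R : α) (n : ℕ) :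
    Pairwise (Disjoint on fun k : Fin n => Ioo ((k : α) * R / n) (((k : α) + 1) * R / n)) := by
  have h := (pairwise_disjoint_Ioo_add_zsmul (0 : α) (R / n)).comp_of_injective
    (f := fun k : Fin n => ((k : ℕ) : ℤ)) (Nat.cast_injective.comp Fin.val_injective)
  convert h using 3 with k
  simp [zsmul_eq_mul, mul_div_assoc]

end Subintervals

theorem card_mul_le_of_pairwise_disjoint_Ioo_subset {ι : Type*} [Fintype ι] {s : Set ℝ}
    {δ g : ℝ} (hδ : 0 ≤ δ) (hs : volume s ≤ ENNReal.ofReal δ) (a : ι → ℝ)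
    (hdisj : Pairwise (Disjoint on fun i => Ioo (a i) (a i + g)))
    (hsub : ∀ i, Ioo (a i) (a i + g) ⊆ s) :
    Fintype.card ι * g ≤ δ := by
  rw [← ENNReal.ofReal_le_ofReal_iff hδ]
  calc ENNReal.ofReal (Fintype.card ι * g)
      = volume (⋃ i, Ioo (a i) (a i + g)) := by
        rw [measure_iUnion hdisj fun _ => measurableSet_Ioo, tsum_fintype]
        simp [Real.volume_Ioo, ENNReal.ofReal_mul, Finset.card_univ]
    _ ≤ volume s := measure_mono (iUnion_subset hsub)
    _ ≤ ENNReal.ofReal δ := hs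

theorem kam_gaps_pigeonhole_general (R δ g : ℝ) (C : Set ℝ)
    (hδ : 0 < δ) (hmeas : volume (Set.Icc 0 R \ C) ≤ ENNReal.ofReal δ)
    (n : ℕ) (hng : δ < n * g) :
    ∃ k : Fin n, ∀ a : ℝ,
      Set.Icc a (a + g) ⊆ Set.Icc ((k : ℝ) * R / n) (((k : ℝ) + 1) * R / n) →
      (Set.Ioo a (a + g) ∩ C).Nonempty := by
  by_contra! hgaps
  choose a ha_sub ha_gap using hgaps
  have ha_Ioo k := Ioo_subset_Ioo_of_Icc_subset_Icc (ha_sub k)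
  have hdisj : Pairwise (Disjoint on fun k => Ioo (a k) (a k + g)) := fun j k hjk =>
    (pairwise_disjoint_Ioo_mul_div R n hjk).mono (ha_Ioo j) (ha_Ioo k)
  have hsub k : Ioo (a k) (a k + g) ⊆ Icc 0 R \ C := fun x hx =>
    ⟨Ioo_mul_div_subset_Icc R k.isLt (ha_Ioo k hx), fun hxC => (ha_gap k).subset ⟨hx, hxC⟩⟩
  have := card_mul_le_of_pairwise_disjoint_Ioo_subset hδ.le hmeas a hdisj hsub
  rw [Fintype.card_fin] at this
  linarith

/-- Pigeonhole lemma on KAM gaps: if `C ⊆ [0,R]` has complement in `[0,R]` of measure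
at most `δ`, and `n·g > δ`, then among the `n` consecutive subintervals of `[0,R]` of
equal length there is one, `I`, such that every open subinterval of `I` of length `g`
contains a point of `C`. -/
theorem kam_gaps_pigeonhole (R δ g : ℝ) (C : Set ℝ)
    (hC : MeasurableSet C) (hCsub : C ⊆ Set.Icc 0 R)
    (hδ : 0 < δ) (hmeas : volume (Set.Icc 0 R \ C) ≤ ENNReal.ofReal δ)
    (hg : 0 < g) (n : ℕ) (hn : 1 ≤ n) (hng : δ < n * g) :
    ∃ k : Fin n, ∀ a : ℝ,
      Set.Icc a (a + g) ⊆ Set.Icc ((k : ℝ) * R / n) (((k : ℝ) + 1) * R / n) →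
      (Set.Ioo a (a + g) ∩ C).Nonempty :=
  kam_gaps_pigeonhole_general R δ g C hδ hmeas n hng
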